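/- arXiv:1403.7640 — 3 statements merged into one kernel-verified Lean document; each statement's English description precedes it below -/
import Mathlib

section
/- Let Φ : [0,1] → ℝ be strictly convex, let u be an m×m unitary matrix, and let n_1,...,n_m ∈ [0,1]. If equality holds in sum_i Φ(sum_j |u_{ij}|² n_j) ≤ sum_j Φ(n_j), then for every i there exists a value c_i such that u_{ij} = 0 whenever n_j ≠ c_i, and sum_j |u_{ij}|² n_j = c_i. -/
/-!
The matrix `(‖u i j‖²)` of a unitary `u` is doubly stochastic. Row by row, Jensen's inequality
gives `Φ (∑ j, ‖u i j‖² n j) ≤ ∑ j, ‖u i j‖² Φ (n j)`, and summing over `i` the right-hand sides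
add up to `∑ j, Φ (n j)` because the columns sum to one. Equality of the totals therefore forces
equality in every row, and the equality case of Jensen's inequality for a strictly convex `Φ`
says that every `n j` carrying nonzero weight in row `i` equals the row average.
-/

open Finset Matrix

namespace Matrix

lemma sum_sum_smul_of_mem_doublyStochastic {𝕜 β ι : Type*} [Fintype ι] [DecidableEq ι]
    [Semiring 𝕜] [PartialOrder 𝕜] [IsOrderedRing 𝕜] [AddCommMonoid β] [Module 𝕜 β]
    {M : Matrix ι ι 𝕜} (hM : M ∈ doublyStochastic 𝕜 ι) (y : ι → β) :
    ∑ i, ∑ j, M i j • y j = ∑ j, y j := by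
  rw [sum_comm]
  simp only [← sum_smul, sum_col_of_mem_doublyStochastic hM, one_smul]

section Unitary

variable {ι 𝕜 : Type*} [Fintype ι] [DecidableEq ι] [RCLike 𝕜] {U : Matrix ι ι 𝕜}

lemma sum_norm_sq_row_of_mem_unitaryGroup (hU : U ∈ unitaryGroup ι 𝕜) (i : ι) :
    ∑ j, ‖U i j‖ ^ 2 = 1 := by
  have h := congrFun₂ (mem_unitaryGroup_iff.mp hU) i i
  simp only [mul_apply, star_apply, one_apply_eq, RCLike.star_def, RCLike.mul_conj] at h
  exact_mod_cast h

lemma sum_norm_sq_col_of_mem_unitaryGroup (hU : U ∈ unitaryGroup ι 𝕜) (j : ι) :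
    ∑ i, ‖U i j‖ ^ 2 = 1 := by
  have h := congrFun₂ (mem_unitaryGroup_iff'.mp hU) j j
  simp only [mul_apply, star_apply, one_apply_eq, RCLike.star_def, RCLike.conj_mul] at h
  exact_mod_cast h

lemma of_norm_sq_mem_doublyStochastic (hU : U ∈ unitaryGroup ι 𝕜) :
    of (fun i j ↦ ‖U i j‖ ^ 2) ∈ doublyStochastic ℝ ι :=
  mem_doublyStochastic_iff_sum.mpr ⟨fun _ _ ↦ sq_nonneg _,
    sum_norm_sq_row_of_mem_unitaryGroup hU, sum_norm_sq_col_of_mem_unitaryGroup hU⟩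

end Unitary

end Matrix

section DoublyStochasticJensen

variable {𝕜 E β ι : Type*} [Fintype ι] [DecidableEq ι]
  [Field 𝕜] [LinearOrder 𝕜] [IsStrictOrderedRing 𝕜] [AddCommGroup E] [AddCommGroup β]
  [PartialOrder β] [IsOrderedAddMonoid β] [Module 𝕜 E] [Module 𝕜 β] [IsStrictOrderedModule 𝕜 β]
  {s : Set E} {f : E → β} {M : Matrix ι ι 𝕜} {x : ι → E}

lemma ConvexOn.map_sum_smul_le_of_mem_doublyStochastic (hf : ConvexOn 𝕜 s f)
    (hM : M ∈ doublyStochastic 𝕜 ι) (hx : ∀ j, x j ∈ s) (i : ι) :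
    f (∑ j, M i j • x j) ≤ ∑ j, M i j • f (x j) :=
  hf.map_sum_le (fun _ _ ↦ nonneg_of_mem_doublyStochastic hM)
    (sum_row_of_mem_doublyStochastic hM i) fun j _ ↦ hx j

lemma StrictConvexOn.eq_sum_smul_of_sum_map_eq_of_mem_doublyStochastic (hf : StrictConvexOn 𝕜 s f)
    (hM : M ∈ doublyStochastic 𝕜 ι) (hx : ∀ j, x j ∈ s)
    (heq : ∑ i, f (∑ j, M i j • x j) = ∑ j, f (x j)) {i j : ι} (hij : M i j ≠ 0) :
    x j = ∑ k, M i k • x k := by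
  have hrow : f (∑ k, M i k • x k) = ∑ k, M i k • f (x k) := by
    refine (sum_eq_sum_iff_of_le fun i _ ↦
      hf.convexOn.map_sum_smul_le_of_mem_doublyStochastic hM hx i).mp ?_ i (mem_univ i)
    rw [sum_sum_smul_of_mem_doublyStochastic hM, heq]
  exact (hf.map_sum_eq_iff' (fun _ _ ↦ nonneg_of_mem_doublyStochastic hM)
    (sum_row_of_mem_doublyStochastic hM i) fun k _ ↦ hx k).mp hrow j (mem_univ j) hij

end DoublyStochasticJensen

theorem doubly_stochastic_jensen_equality_case (m : ℕ) (Φ : ℝ → ℝ)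
    (hΦ : StrictConvexOn ℝ (Set.Icc (0:ℝ) 1) Φ)
    (u : Matrix (Fin m) (Fin m) ℂ) (hu : u ∈ Matrix.unitaryGroup (Fin m) ℂ)
    (n : Fin m → ℝ) (hn : ∀ j, n j ∈ Set.Icc (0:ℝ) 1)
    (heq : ∑ i, Φ (∑ j, ‖u i j‖ ^ 2 * n j) = ∑ j, Φ (n j)) :
    ∀ i, ∃ c : ℝ, (∀ j, n j ≠ c → u i j = 0) ∧ ∑ j, ‖u i j‖ ^ 2 * n j = c := by
  intro i
  refine ⟨∑ j, ‖u i j‖ ^ 2 * n j, fun j hj ↦ ?_, rfl⟩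
  by_contra hij
  exact hj (hΦ.eq_sum_smul_of_sum_map_eq_of_mem_doublyStochastic
    (of_norm_sq_mem_doublyStochastic hu) hn heq (by simpa using hij))
end

section
/- Let q be a probability distribution on ℕ^m with finite mean occupations n_i = sum_n n(i) q(n), and finite Shannon entropy. Among all product geometric distributions p(n) = prod_i (1−z_i) z_i^{n(i)} with z_i ∈ [0,1), the Kullback–Leibler divergence D(q ‖ p) is minimized by the choice z_i = n_i/(1+n_i), and the minimum value equals sum_i [(1+n_i) log(1+n_i) − n_i log n_i] + sum_n q(n) log q(n). -/
/-- Kullback–Leibler summand in the extended reals, with conventions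
`0 log 0 = 0` and `q log(q/0) = ⊤` for `q > 0`. -/
noncomputable def klTerm (q p : ℝ) : EReal :=
  if q = 0 then 0 else if p = 0 then ⊤ else ((q * Real.log (q / p) : ℝ) : EReal)

/-- Product geometric distribution on occupation lists `ℕ^m` with parameters `z i`. -/
noncomputable def prodGeometric {m : ℕ} (z : Fin m → ℝ) : (Fin m → ℕ) → ℝ :=
  fun n => ∏ i, (1 - z i) * (z i) ^ (n i)

/-!
The expected log-likelihood of `q` under a product geometric law only sees the mean
occupations: `∑ₙ q(n) log p_z(n) = ∑ᵢ (log (1 - zᵢ) + n̄ᵢ log zᵢ)`. Hence, whenever `p_z`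
charges the support of `q`, `D(q ‖ p_z)` is the entropy term minus this sum, and the problem
splits into the one-variable maximisations of `z ↦ log (1 - z) + t log z` on `[0, 1)`, solved
by `z = t / (1 + t)` via `log x ≤ x - 1`. If `p_z` misses the support of `q`, then some
`zᵢ = 0 < n̄ᵢ` and the divergence is `⊤`.
-/

open Real Finset

namespace EReal

lemma finset_sum_ne_bot {ι : Type*} {s : Finset ι} {f : ι → EReal} (h : ∀ i ∈ s, f i ≠ ⊥) :
    ∑ i ∈ s, f i ≠ ⊥ := by
  induction s using Finset.cons_induction <;> simp_all

lemma hasSum_coe {ι : Type*} {f : ι → ℝ} {a : ℝ} (h : HasSum f a) :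
    HasSum (fun i => (f i : EReal)) a :=
  h.map (⟨⟨Real.toEReal, coe_zero⟩, coe_add⟩ : ℝ →+ EReal) continuous_coe_real_ereal

lemma tsum_eq_top_of_eq_top {ι : Type*} {f : ι → EReal} (hf : ∀ i, f i ≠ ⊥) {i₀ : ι}
    (h : f i₀ = ⊤) : ∑' i, f i = ⊤ := by
  classical
  refine HasSum.tsum_eq (tendsto_const_nhds.congr' ?_)
  filter_upwards [Filter.eventually_ge_atTop {i₀}] with s hs
  rw [eq_comm, ← Finset.add_sum_erase s f (singleton_subset_iff.1 hs), h,
    top_add_of_ne_bot (finset_sum_ne_bot fun i _ => hf i)]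

end EReal

lemma eq_zero_iff_of_hasSum_natCast_mul {ι : Type*} {f : ι → ℕ} {q : ι → ℝ} {a : ℝ}
    (hq0 : ∀ x, 0 ≤ q x) (h : HasSum (fun x => (f x : ℝ) * q x) a) :
    a = 0 ↔ ∀ x, q x ≠ 0 → f x = 0 := by
  constructor
  · rintro rfl x hx
    have hfq := (hasSum_zero_iff_of_nonneg fun x => mul_nonneg (Nat.cast_nonneg _) (hq0 x)).1 h
    simpa [hx] using congrFun hfq x
  · intro hsupp
    refine h.unique (hasSum_zero.congr_fun fun x => ?_)
    by_cases hx : q x = 0 <;> simp [hx, hsupp x]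

lemma log_one_sub_div_add_mul_log_div (t : ℝ) :
    log (1 - t / (1 + t)) + t * log (t / (1 + t)) = -((1 + t) * log (1 + t) - t * log t) := by
  rcases eq_or_ne t 0 with rfl | ht
  · simp
  rcases eq_or_ne (1 + t) 0 with h1 | h1
  · obtain rfl : t = -1 := by linarith
    norm_num
  have hinv : 1 - t / (1 + t) = (1 + t)⁻¹ := by field_simp; ring
  rw [hinv, log_inv, log_div ht h1]
  ring

lemma log_one_sub_add_mul_log_le {t z : ℝ} (ht : 0 ≤ t) (hz0 : 0 ≤ z) (hz1 : z < 1)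
    (h0 : z = 0 → t = 0) :
    log (1 - z) + t * log z ≤ log (1 - t / (1 + t)) + t * log (t / (1 + t)) := by
  rw [log_one_sub_div_add_mul_log_div]
  rcases ht.eq_or_lt with rfl | ht
  · simpa using log_nonpos (by linarith) (by linarith)
  have hz : 0 < z := hz0.lt_of_ne fun h => ht.ne' (h0 h.symm)
  have h1 : 0 < 1 + t := by linarith
  -- `log x ≤ x - 1` at the ratios of `1 - z` and `z` to their optimal values `1 / (1 + t)` and
  -- `t / (1 + t)`; the weighted sum of the right-hand sides vanishes
  have hratio₁ : log (1 - z) + log (1 + t) ≤ (1 - z) * (1 + t) - 1 := by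
    rw [← log_mul (by linarith) h1.ne']
    exact log_le_sub_one_of_pos (mul_pos (by linarith) h1)
  have hratio₂ : t * (log z + log (1 + t) - log t) ≤ z * (1 + t) - t := by
    rw [← log_mul hz.ne' h1.ne', ← log_div (by positivity) ht.ne']
    calc t * log (z * (1 + t) / t) ≤ t * (z * (1 + t) / t - 1) :=
          mul_le_mul_of_nonneg_left (log_le_sub_one_of_pos (by positivity)) ht.le
      _ = z * (1 + t) - t := by field_simp
  linarith

lemma klTerm_ne_bot (q p : ℝ) : klTerm q p ≠ ⊥ := by
  unfold klTerm
  split_ifs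
  exacts [EReal.zero_ne_bot, top_ne_bot, EReal.coe_ne_bot _]

lemma klTerm_eq_coe {q p : ℝ} (h : q ≠ 0 → p ≠ 0) :
    klTerm q p = ((q * log q - q * log p : ℝ) : EReal) := by
  by_cases hq : q = 0
  · simp [klTerm, hq]
  · rw [klTerm, if_neg hq, if_neg (h hq), log_div hq (h hq), mul_sub]

section ProdGeometric

variable {m : ℕ} {z : Fin m → ℝ} {n : Fin m → ℕ}

lemma prodGeometric_ne_zero (hz1 : ∀ i, z i ≠ 1) (hz0 : ∀ i, z i = 0 → n i = 0) :
    prodGeometric z n ≠ 0 := by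
  refine prod_ne_zero_iff.2 fun i _ => mul_ne_zero (sub_ne_zero.2 (hz1 i).symm) ?_
  by_cases hzi : z i = 0
  · simp [hz0 i hzi]
  · exact pow_ne_zero _ hzi

lemma prodGeometric_eq_zero {i : Fin m} (hz : z i = 0) (hn : n i ≠ 0) :
    prodGeometric z n = 0 :=
  prod_eq_zero (mem_univ i) (by simp [hz, hn])

lemma log_prodGeometric (h : prodGeometric z n ≠ 0) :
    log (prodGeometric z n) = ∑ i, (log (1 - z i) + n i * log (z i)) := by
  have hfac : ∀ i, (1 - z i) * z i ^ n i ≠ 0 := fun i => prod_ne_zero_iff.1 h i (mem_univ i)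
  rw [prodGeometric, log_prod fun i _ => hfac i]
  refine sum_congr rfl fun i _ => ?_
  rw [log_mul (left_ne_zero_of_mul (hfac i)) (right_ne_zero_of_mul (hfac i)), log_pow]

lemma hasSum_mul_log_prodGeometric {q : (Fin m → ℕ) → ℝ} {nbar : Fin m → ℝ}
    (hq1 : HasSum q 1) (hmean : ∀ i, HasSum (fun n : Fin m → ℕ => (n i : ℝ) * q n) (nbar i))
    (hsupp : ∀ n, q n ≠ 0 → prodGeometric z n ≠ 0) :
    HasSum (fun n => q n * log (prodGeometric z n))
      (∑ i, (log (1 - z i) + nbar i * log (z i))) := by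
  have hterm : ∀ n, q n * log (prodGeometric z n) =
      ∑ i, (log (1 - z i) * q n + log (z i) * ((n i : ℝ) * q n)) := by
    intro n
    by_cases hqn : q n = 0
    · simp [hqn]
    · rw [log_prodGeometric (hsupp n hqn), mul_sum]
      exact sum_congr rfl fun i _ => by ring
  simp_rw [hterm]
  refine hasSum_sum fun i _ => ?_
  simpa [mul_comm] using (hq1.mul_left (log (1 - z i))).add ((hmean i).mul_left (log (z i)))

lemma hasSum_klTerm_prodGeometric {q : (Fin m → ℕ) → ℝ} {nbar : Fin m → ℝ}
    (hq1 : HasSum q 1) (hmean : ∀ i, HasSum (fun n : Fin m → ℕ => (n i : ℝ) * q n) (nbar i))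
    (hent : Summable (fun n => q n * log (q n)))
    (hsupp : ∀ n, q n ≠ 0 → prodGeometric z n ≠ 0) :
    HasSum (fun n => klTerm (q n) (prodGeometric z n))
      ((∑' n, q n * log (q n)) - ∑ i, (log (1 - z i) + nbar i * log (z i)) : ℝ) := by
  simp_rw [klTerm_eq_coe (hsupp _)]
  exact EReal.hasSum_coe (hent.hasSum.sub (hasSum_mul_log_prodGeometric hq1 hmean hsupp))

end ProdGeometric

theorem product_geometric_minimizes_kl (m : ℕ)
    (q : (Fin m → ℕ) → ℝ) (hq0 : ∀ n, 0 ≤ q n) (hq1 : HasSum q 1)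
    (nbar : Fin m → ℝ)
    (hmean : ∀ i, HasSum (fun n : Fin m → ℕ => (n i : ℝ) * q n) (nbar i))
    (hent : Summable (fun n : Fin m → ℕ => q n * Real.log (q n))) :
    (∀ z : Fin m → ℝ, (∀ i, z i ∈ Set.Ico (0:ℝ) 1) →
      ∑' n : Fin m → ℕ, klTerm (q n) (prodGeometric (fun i => nbar i / (1 + nbar i)) n) ≤
        ∑' n : Fin m → ℕ, klTerm (q n) (prodGeometric z n)) ∧
    ∑' n : Fin m → ℕ, klTerm (q n) (prodGeometric (fun i => nbar i / (1 + nbar i)) n) =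
      (((∑ i, ((1 + nbar i) * Real.log (1 + nbar i) - nbar i * Real.log (nbar i))) +
        ∑' n : Fin m → ℕ, q n * Real.log (q n) : ℝ) : EReal) := by
  have hnbar : ∀ i, 0 ≤ nbar i := fun i =>
    (hmean i).nonneg fun n => mul_nonneg (Nat.cast_nonneg _) (hq0 n)
  have habs : ∀ z : Fin m → ℝ, (∀ i, z i ≠ 1) → (∀ i, z i = 0 → nbar i = 0) →
      ∀ n, q n ≠ 0 → prodGeometric z n ≠ 0 := fun z hz1 hz0 n hn =>
    prodGeometric_ne_zero hz1 fun i hzi =>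
      (eq_zero_iff_of_hasSum_natCast_mul hq0 (hmean i)).1 (hz0 i hzi) n hn
  have hstar := (hasSum_klTerm_prodGeometric hq1 hmean hent <|
    habs (fun i => nbar i / (1 + nbar i))
      (fun i => ((div_lt_one (by linarith [hnbar i])).2 (lt_one_add _)).ne)
      (fun i h => (div_eq_zero_iff.1 h).resolve_right (by linarith [hnbar i]))).tsum_eq
  refine ⟨fun z hz => ?_, ?_⟩
  · by_cases hz0 : ∀ i, z i = 0 → nbar i = 0
    · rw [hstar, (hasSum_klTerm_prodGeometric hq1 hmean hent
        (habs z (fun i => (hz i).2.ne) hz0)).tsum_eq, EReal.coe_le_coe_iff]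
      exact sub_le_sub_left (sum_le_sum fun i _ =>
        log_one_sub_add_mul_log_le (hnbar i) (hz i).1 (hz i).2 (hz0 i)) _
    · push Not at hz0
      obtain ⟨i, hzi, hni⟩ := hz0
      obtain ⟨n, hqn, hn⟩ : ∃ n, q n ≠ 0 ∧ n i ≠ 0 := by
        simpa using mt (eq_zero_iff_of_hasSum_natCast_mul hq0 (hmean i)).2 hni
      have htop : klTerm (q n) (prodGeometric z n) = ⊤ := by
        simp [klTerm, hqn, prodGeometric_eq_zero hzi hn]
      rw [EReal.tsum_eq_top_of_eq_top (fun n => klTerm_ne_bot _ _) htop]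
      exact le_top
  · rw [hstar, sum_congr rfl fun i _ => log_one_sub_div_add_mul_log_div (nbar i),
      sum_neg_distrib, sub_neg_eq_add, add_comm]
end

section
/- For a pure n-boson state with n ≥ 1, the nonfreeness sum_i (1+n_i) log(1+n_i) − sum_i n_i log n_i (where n_i ≥ 0 are the natural occupation numbers with sum_i n_i = n) is strictly positive, and among all occupation-number sequences with sum n, it is minimized by concentrating all occupation in a single mode (n_1 = n, all others 0), giving minimum value (1+n) log(1+n) − n log n. -/
/-!
Write `f x = (1 + x) log (1 + x) - x log x`. Since `f' x = log (1 + x) - log x > 0`, `f` is strictly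
increasing on `[0, ∞)` with `f 0 = 0`, so `f > 0` on `(0, ∞)`. The identity `f x = x f (1 / x)` then
shows that `f x / x = f (1 / x)` is decreasing, so `f x ≥ (x / n) f n` whenever `0 ≤ x ≤ n`.
Summing over the modes, whose occupations add up to `n`, gives `∑ f (n_i) ≥ f n > 0`, with
equality when all of `n` sits in one mode.
-/

open Real

noncomputable def boseEntropy (x : ℝ) : ℝ := (1 + x) * log (1 + x) - x * log x

@[simp]
lemma boseEntropy_zero : boseEntropy 0 = 0 := by simp [boseEntropy]

lemma hasDerivAt_boseEntropy {x : ℝ} (hx : 0 < x) :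
    HasDerivAt boseEntropy (log (1 + x) - log x) x := by
  have hshift : HasDerivAt (fun y : ℝ => (1 + y) * log (1 + y)) (log (1 + x) + 1) x :=
    (hasDerivAt_mul_log (by linarith : 1 + x ≠ 0)).comp x
      ((hasDerivAt_id x).const_add 1) |>.congr_deriv (mul_one _)
  exact (hshift.sub (hasDerivAt_mul_log hx.ne')).congr_deriv (by ring)

lemma strictMonoOn_boseEntropy : StrictMonoOn boseEntropy (Set.Ici 0) := by
  have hcont : ContinuousOn boseEntropy (Set.Ici 0) :=
    ((continuous_mul_log.comp (continuous_const.add continuous_id)).sub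
      continuous_mul_log).continuousOn
  refine strictMonoOn_of_deriv_pos (convex_Ici 0) hcont fun x hx => ?_
  rw [interior_Ici] at hx
  rw [(hasDerivAt_boseEntropy hx).deriv, sub_pos]
  exact log_lt_log hx (by linarith)

lemma boseEntropy_pos {x : ℝ} (hx : 0 < x) : 0 < boseEntropy x := by
  simpa using strictMonoOn_boseEntropy Set.self_mem_Ici hx.le hx

lemma boseEntropy_nonneg {x : ℝ} (hx : 0 ≤ x) : 0 ≤ boseEntropy x := by
  simpa using strictMonoOn_boseEntropy.monotoneOn Set.self_mem_Ici hx hx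

lemma boseEntropy_eq_mul_boseEntropy_inv {x : ℝ} (hx : 0 < x) :
    boseEntropy x = x * boseEntropy x⁻¹ := by
  have hlog : log (1 + x⁻¹) = log (1 + x) - log x := by
    rw [show 1 + x⁻¹ = (1 + x) / x by field_simp; ring, log_div (by linarith) hx.ne']
  simp only [boseEntropy, hlog, log_inv]
  field_simp
  ring

lemma div_mul_boseEntropy_le {x n : ℝ} (hx : 0 ≤ x) (hxn : x ≤ n) :
    x / n * boseEntropy n ≤ boseEntropy x := by
  rcases hx.eq_or_lt with rfl | hx
  · simp
  have hn : 0 < n := hx.trans_le hxn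
  have hinv : boseEntropy n⁻¹ ≤ boseEntropy x⁻¹ :=
    strictMonoOn_boseEntropy.monotoneOn (inv_nonneg.2 hn.le) (inv_nonneg.2 hx.le)
      (inv_anti₀ hx hxn)
  calc x / n * boseEntropy n = x * boseEntropy n⁻¹ := by
        rw [boseEntropy_eq_mul_boseEntropy_inv hn]; field_simp
    _ ≤ x * boseEntropy x⁻¹ := mul_le_mul_of_nonneg_left hinv hx.le
    _ = boseEntropy x := (boseEntropy_eq_mul_boseEntropy_inv hx).symm

lemma ofReal_boseEntropy_le_tsum {ι : Type*} {occ : ι → ℝ} {n : ℝ} (h0 : ∀ i, 0 ≤ occ i)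
    (hsum : HasSum occ n) :
    ENNReal.ofReal (boseEntropy n) ≤ ∑' i, ENNReal.ofReal (boseEntropy (occ i)) := by
  have hn : 0 ≤ n := hsum.nonneg h0
  have hchord : HasSum (fun i => occ i / n * boseEntropy n) (boseEntropy n) := by
    rcases hn.eq_or_lt with rfl | hnpos
    · simp
    have h := hsum.mul_right (boseEntropy n / n)
    rw [mul_div_cancel₀ _ hnpos.ne'] at h
    simpa only [mul_div_assoc', div_mul_eq_mul_div] using h
  have hnonneg : ∀ i, 0 ≤ occ i / n * boseEntropy n := fun i =>
    mul_nonneg (div_nonneg (h0 i) hn) (boseEntropy_nonneg hn)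
  have hle : ∀ i, occ i / n * boseEntropy n ≤ boseEntropy (occ i) := fun i =>
    div_mul_boseEntropy_le (h0 i) (le_hasSum hsum i fun j _ => h0 j)
  calc ENNReal.ofReal (boseEntropy n)
      = ∑' i, ENNReal.ofReal (occ i / n * boseEntropy n) := by
        rw [← ENNReal.ofReal_tsum_of_nonneg hnonneg hchord.summable, hchord.tsum_eq]
    _ ≤ ∑' i, ENNReal.ofReal (boseEntropy (occ i)) :=
        ENNReal.tsum_le_tsum fun i => ENNReal.ofReal_le_ofReal (hle i)

theorem pure_boson_nonfreeness_positive_and_minimized (n : ℕ) (hn : 1 ≤ n)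
    (occ : ℕ → ℝ) (h0 : ∀ i, 0 ≤ occ i) (hsum : HasSum occ (n : ℝ)) :
    0 < ∑' i, ENNReal.ofReal
        ((1 + occ i) * Real.log (1 + occ i) - occ i * Real.log (occ i)) ∧
    ENNReal.ofReal ((1 + (n : ℝ)) * Real.log (1 + (n : ℝ)) - (n : ℝ) * Real.log (n : ℝ)) ≤
      ∑' i, ENNReal.ofReal
        ((1 + occ i) * Real.log (1 + occ i) - occ i * Real.log (occ i)) ∧
    ∑' i, ENNReal.ofReal
        ((1 + (if i = 0 then (n : ℝ) else 0)) * Real.log (1 + (if i = 0 then (n : ℝ) else 0)) -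
          (if i = 0 then (n : ℝ) else 0) * Real.log (if i = 0 then (n : ℝ) else 0)) =
      ENNReal.ofReal ((1 + (n : ℝ)) * Real.log (1 + (n : ℝ)) - (n : ℝ) * Real.log (n : ℝ)) := by
  have hle : ENNReal.ofReal (boseEntropy n) ≤ ∑' i, ENNReal.ofReal (boseEntropy (occ i)) :=
    ofReal_boseEntropy_le_tsum h0 hsum
  have hpos : 0 < ENNReal.ofReal (boseEntropy n) :=
    ENNReal.ofReal_pos.2 (boseEntropy_pos (by exact_mod_cast hn))
  refine ⟨hpos.trans_le hle, hle, ?_⟩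
  rw [tsum_eq_single 0 fun i hi => by simp [hi]]
  simp
end
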